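/- arXiv:1906.08383 — 3 statements merged into one kernel-verified Lean document; each statement's English description precedes it below -/
import Mathlib

section
/- In the abstract stochastic gradient ascent setting, assume additionally that |J(θ)| ≤ B for all θ, run the iteration from k = 1 with θ_1 deterministic, and use a constant stepsize α_k = α > 0 for all k. Then for every k ≥ 1, (1/k) ∑_{m=1}^k E‖∇J(θ_m)‖² ≤ 2B/(αk) + L α ℓ². In particular, the average expected squared gradient norm converges at rate 1/k to a neighborhood of zero of size L α ℓ² controlled by the stepsize α. -/
open MeasureTheory Filter Topology InnerProductSpace

lemma descent_aux {E : Type*} [NormedAddCommGroup E] [InnerProductSpace ℝ E] [CompleteSpace E]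
    {J : E → ℝ} {L : ℝ} (hL : 0 ≤ L) (hJdiff : Differentiable ℝ J)
    (hJLip : ∀ x y, ‖gradient J x - gradient J y‖ ≤ L * ‖x - y‖) (x y : E) :
    |J y - J x - inner ℝ (gradient J x) (y - x)| ≤ L * ‖y - x‖ ^ 2 := by
  set v := gradient J x with hv
  set f : E → ℝ := fun z => J z - inner ℝ v z with hf
  have hfd : ∀ z : E, HasFDerivAt f (fderiv ℝ J z - toDual ℝ E v) z := by
    intro z
    have h1 : HasFDerivAt J (fderiv ℝ J z) z := (hJdiff z).hasFDerivAt
    have h2 : HasFDerivAt (fun w : E => (inner ℝ v w : ℝ)) (toDual ℝ E v) z := by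
      have := (toDual ℝ E v).hasFDerivAt (x := z)
      exact this
    exact h1.sub h2
  have hnorm : ∀ z : E, ‖fderiv ℝ J z - toDual ℝ E v‖ = ‖gradient J z - v‖ := by
    intro z
    have : fderiv ℝ J z = toDual ℝ E (gradient J z) := by
      rw [gradient, (toDual ℝ E).apply_symm_apply]
    rw [this, ← map_sub, (toDual ℝ E).norm_map]
  have key : ‖f y - f x‖ ≤ (L * ‖y - x‖) * ‖y - x‖ := by
    apply (convex_closedBall x ‖y - x‖).norm_image_sub_le_of_norm_fderiv_le
      (fun z _ => (hfd z).differentiableAt)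
      (fun z hz => ?_) (Metric.mem_closedBall_self (norm_nonneg _))
      (by simp [Metric.mem_closedBall, dist_eq_norm])
    · rw [(hfd z).fderiv, hnorm z]
      calc ‖gradient J z - v‖ ≤ L * ‖z - x‖ := hJLip z x
        _ ≤ L * ‖y - x‖ := by
            have hz' : ‖z - x‖ ≤ ‖y - x‖ := by
              simpa [Metric.mem_closedBall, dist_eq_norm] using hz
            exact mul_le_mul_of_nonneg_left hz' hL
  have hfy : f y - f x = J y - J x - inner ℝ v (y - x) := by
    simp [hf, inner_sub_right]; ring
  rw [hfy] at key
  calc |J y - J x - inner ℝ v (y - x)| ≤ (L * ‖y - x‖) * ‖y - x‖ := key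
    _ = L * ‖y - x‖ ^ 2 := by ring

lemma condexp_clm_comp {Ω : Type*} {m m0 : MeasurableSpace Ω} {μ : Measure Ω} [IsFiniteMeasure μ]
    (hm : m ≤ m0) {E F : Type*} [NormedAddCommGroup E] [NormedSpace ℝ E] [CompleteSpace E]
    [NormedAddCommGroup F] [NormedSpace ℝ F] [CompleteSpace F]
    (T : E →L[ℝ] F) {g : Ω → E} (hg : Integrable g μ) :
    μ[fun ω => T (g ω)|m] =ᵐ[μ] fun ω => T ((μ[g|m]) ω) := by
  refine (ae_eq_condExp_of_forall_setIntegral_eq hm (T.integrable_comp hg) ?_ ?_ ?_).symm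
  · intro s _ _
    exact (T.integrable_comp integrable_condExp).integrableOn
  · intro s hs hμs
    rw [ContinuousLinearMap.integral_comp_comm T (integrable_condExp.integrableOn),
      ContinuousLinearMap.integral_comp_comm T hg.integrableOn,
      setIntegral_condExp hm hg hs]
  · exact (T.continuous.comp_stronglyMeasurable stronglyMeasurable_condExp).aestronglyMeasurable

lemma coord_abs_le_norm {n : ℕ} (x : EuclideanSpace ℝ (Fin n)) (i : Fin n) : |x i| ≤ ‖x‖ := by
  rw [EuclideanSpace.norm_eq x,
    show |x i| = Real.sqrt (|x i| ^ 2) by rw [Real.sqrt_sq (abs_nonneg _)]]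
  apply Real.sqrt_le_sqrt
  calc |x i| ^ 2 = ‖x i‖ ^ 2 := by rw [Real.norm_eq_abs]
    _ ≤ ∑ j, ‖x j‖ ^ 2 := Finset.single_le_sum (f := fun j => ‖x j‖ ^ 2) (fun j _ => sq_nonneg _) (Finset.mem_univ i)

/-- Convergence rate of the RPG iteration with a constant stepsize `α`:
the averaged expected squared gradient norm is at most `2B/(αk) + Lαℓ²`. -/
theorem rpg_rate_constant_stepsize
    {d : ℕ} (hd : 1 ≤ d)
    {Ω : Type*} {mΩ : MeasurableSpace Ω} {μ : Measure Ω} [IsProbabilityMeasure μ]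
    (ℱ : Filtration ℕ mΩ)
    (L ℓ B : ℝ) (hL : 0 < L) (hℓ : 0 < ℓ)
    (J : EuclideanSpace ℝ (Fin d) → ℝ)
    (hJdiff : Differentiable ℝ J)
    (hJLip : ∀ x y : EuclideanSpace ℝ (Fin d),
      ‖gradient J x - gradient J y‖ ≤ L * ‖x - y‖)
    (hJbdd : ∀ x, |J x| ≤ B)
    (θ g : ℕ → Ω → EuclideanSpace ℝ (Fin d))
    (x₁ : EuclideanSpace ℝ (Fin d)) (hθ1 : θ 1 = fun _ => x₁)
    (hθadapted : Adapted ℱ θ)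
    (hgmeas : ∀ k, StronglyMeasurable[ℱ (k + 1)] (g k))
    (α : ℝ) (hαpos : 0 < α)
    (hupdate : ∀ k : ℕ, 1 ≤ k → ∀ ω, θ (k + 1) ω = θ k ω + α • g k ω)
    (hunbiased : ∀ k, μ[g k | ℱ k] =ᵐ[μ] fun ω => gradient J (θ k ω))
    (hgbdd : ∀ k, ∀ᵐ ω ∂μ, ‖g k ω‖ ≤ ℓ) :
    ∀ k : ℕ, 1 ≤ k →
      (1 / (k : ℝ)) * ∑ m ∈ Finset.Icc 1 k, ∫ ω, ‖gradient J (θ m ω)‖ ^ 2 ∂μ ≤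
        2 * B / (α * k) + L * α * ℓ ^ 2 := by
  classical
  have hgradcont : Continuous (gradient J) := by
    refine (LipschitzWith.of_dist_le_mul (K := Real.toNNReal L) fun x y => ?_).continuous
    rw [dist_eq_norm, dist_eq_norm, Real.coe_toNNReal _ hL.le]
    exact hJLip x y
  have hθsm : ∀ m, StronglyMeasurable (θ m) := fun m => (hθadapted m).stronglyMeasurable.mono (ℱ.le m)
  have hgsm : ∀ m, StronglyMeasurable (g m) := fun m => (hgmeas m).mono (ℱ.le (m + 1))
  have hgint : ∀ m, Integrable (g m) μ :=
    fun m => (integrable_const ℓ).mono' (hgsm m).aestronglyMeasurable (hgbdd m)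
  -- a.e. bound on the iterates
  have hθbdd : ∀ m : ℕ, 1 ≤ m → ∀ᵐ ω ∂μ, ‖θ m ω‖ ≤ ‖x₁‖ + m * (α * ℓ) := by
    intro m hm
    induction m, hm using Nat.le_induction with
    | base =>
      filter_upwards with ω
      rw [hθ1]
      have : 0 ≤ α * ℓ := by positivity
      simp only [Nat.cast_one, one_mul]
      linarith
    | succ m hm ih =>
      filter_upwards [ih, hgbdd m] with ω h1 h2
      rw [hupdate m hm ω]
      calc ‖θ m ω + α • g m ω‖ ≤ ‖θ m ω‖ + ‖α • g m ω‖ := norm_add_le _ _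
        _ ≤ (‖x₁‖ + m * (α * ℓ)) + α * ℓ := by
            rw [norm_smul, Real.norm_eq_abs, abs_of_pos hαpos]
            have : α * ‖g m ω‖ ≤ α * ℓ := mul_le_mul_of_nonneg_left h2 hαpos.le
            linarith
        _ = ‖x₁‖ + (↑(m + 1)) * (α * ℓ) := by push_cast; ring
  -- a.e. bound on the gradients along the iterates
  set C : ℕ → ℝ := fun m => ‖gradient J x₁‖ + L * (‖x₁‖ + m * (α * ℓ) + ‖x₁‖) with hC
  have hCnonneg : ∀ m : ℕ, 0 ≤ C m := by
    intro m
    have : 0 ≤ (m : ℝ) * (α * ℓ) := by positivity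
    have := norm_nonneg (gradient J x₁)
    have := norm_nonneg x₁
    have h0 : (0:ℝ) ≤ ‖x₁‖ + m * (α * ℓ) + ‖x₁‖ := by linarith
    have := mul_nonneg hL.le h0
    simp only [hC]; linarith
  have hgradbdd : ∀ m : ℕ, 1 ≤ m → ∀ᵐ ω ∂μ, ‖gradient J (θ m ω)‖ ≤ C m := by
    intro m hm
    filter_upwards [hθbdd m hm] with ω h1
    have h2 : ‖gradient J (θ m ω) - gradient J x₁‖ ≤ L * ‖θ m ω - x₁‖ := hJLip _ _
    have h3 : ‖θ m ω - x₁‖ ≤ ‖θ m ω‖ + ‖x₁‖ := norm_sub_le _ _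
    have h4 := norm_sub_norm_le (gradient J (θ m ω)) (gradient J x₁)
    have h5 : L * ‖θ m ω - x₁‖ ≤ L * (‖x₁‖ + m * (α * ℓ) + ‖x₁‖) := by
      apply mul_le_mul_of_nonneg_left _ hL.le
      linarith
    simp only [hC]; linarith
  -- strong measurability of the gradient process
  have hFsm : ∀ m, StronglyMeasurable[ℱ m] (fun ω => gradient J (θ m ω)) :=
    fun m => hgradcont.comp_stronglyMeasurable (hθadapted m).stronglyMeasurable
  have hFsm0 : ∀ m, AEStronglyMeasurable (fun ω => gradient J (θ m ω)) μ :=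
    fun m => ((hFsm m).mono (ℱ.le m)).aestronglyMeasurable
  have hFsqint : ∀ m : ℕ, 1 ≤ m →
      Integrable (fun ω => ‖gradient J (θ m ω)‖ ^ 2) μ := by
    intro m hm
    refine (integrable_const ((C m) ^ 2)).mono' ?_ ?_
    · exact ((hFsm0 m).norm.pow 2)
    · filter_upwards [hgradbdd m hm] with ω h1
      rw [Real.norm_eq_abs, abs_of_nonneg (by positivity)]
      exact pow_le_pow_left₀ (norm_nonneg _) h1 2
  -- the key conditional-expectation identity
  have hinner : ∀ m : ℕ, 1 ≤ m →
      ∫ ω, (inner ℝ (gradient J (θ m ω)) (g m ω) : ℝ) ∂μ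
        = ∫ ω, ‖gradient J (θ m ω)‖ ^ 2 ∂μ := by
    intro m hm
    set F : Ω → EuclideanSpace ℝ (Fin d) := fun ω => gradient J (θ m ω) with hFdef
    have hFb := hgradbdd m hm
    have hFi : ∀ i : Fin d, StronglyMeasurable[ℱ m] fun ω => F ω i := by
      intro i
      exact (EuclideanSpace.proj (𝕜 := ℝ) i).continuous.comp_stronglyMeasurable (hFsm m)
    have hgi : ∀ i : Fin d, Integrable (fun ω => g m ω i) μ :=
      fun i => (EuclideanSpace.proj (𝕜 := ℝ) i).integrable_comp (hgint m)
    have hFgi : ∀ i : Fin d, Integrable (fun ω => F ω i * g m ω i) μ := by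
      intro i
      refine (integrable_const (C m * ℓ)).mono'
        ((((hFi i).mono (ℱ.le m)).aestronglyMeasurable).mul (hgi i).1) ?_
      filter_upwards [hFb, hgbdd m] with ω h1 h2
      rw [Real.norm_eq_abs, abs_mul]
      have e1 : |F ω i| ≤ C m := (coord_abs_le_norm (F ω) i).trans h1
      have e2 : |g m ω i| ≤ ℓ := (coord_abs_le_norm (g m ω) i).trans h2
      exact mul_le_mul e1 e2 (abs_nonneg _) (hCnonneg m)
    have hFFi : ∀ i : Fin d, Integrable (fun ω => F ω i * F ω i) μ := by
      intro i
      refine (integrable_const (C m * C m)).mono'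
        ((((hFi i).mono (ℱ.le m)).aestronglyMeasurable).mul
          (((hFi i).mono (ℱ.le m)).aestronglyMeasurable)) ?_
      filter_upwards [hFb] with ω h1
      rw [Real.norm_eq_abs, abs_mul]
      have e1 : |F ω i| ≤ C m := (coord_abs_le_norm (F ω) i).trans h1
      exact mul_le_mul e1 e1 (abs_nonneg _) (hCnonneg m)
    have hcondg : ∀ i : Fin d,
        μ[(fun ω => g m ω i)|ℱ m] =ᵐ[μ] fun ω => F ω i := by
      intro i
      have h1 := condexp_clm_comp (ℱ.le m) (EuclideanSpace.proj (𝕜 := ℝ) i) (hgint m)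
      refine h1.trans ?_
      filter_upwards [hunbiased m] with ω hω
      simp only [hω]
      rfl
    have hcoord : ∀ i : Fin d,
        ∫ ω, F ω i * g m ω i ∂μ = ∫ ω, F ω i * F ω i ∂μ := by
      intro i
      have step1 : ∫ ω, F ω i * g m ω i ∂μ
          = ∫ ω, (μ[(fun ω => F ω i) * (fun ω => g m ω i)|ℱ m]) ω ∂μ := by
        rw [integral_condExp (ℱ.le m)]
        rfl
      rw [step1]
      apply integral_congr_ae
      refine (condExp_mul_of_stronglyMeasurable_left (hFi i) ?_ (hgi i)).trans ?_
      · exact hFgi i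
      · filter_upwards [hcondg i] with ω hω
        simp only [Pi.mul_apply, hω]
    have hsum1 : ∀ ω, (inner ℝ (F ω) (g m ω) : ℝ) = ∑ i, F ω i * g m ω i := by
      intro ω
      rw [PiLp.inner_apply]
      simp [RCLike.inner_apply, starRingEnd_apply]
      exact Finset.sum_congr rfl (fun i _ => mul_comm _ _)
    have hsum2 : ∀ ω, ‖F ω‖ ^ 2 = ∑ i, F ω i * F ω i := by
      intro ω
      rw [← real_inner_self_eq_norm_sq, PiLp.inner_apply]
      simp [RCLike.inner_apply, starRingEnd_apply]
      exact Finset.sum_congr rfl (fun i _ => sq _)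
    calc ∫ ω, (inner ℝ (F ω) (g m ω) : ℝ) ∂μ
        = ∫ ω, ∑ i, F ω i * g m ω i ∂μ := by simp_rw [hsum1]
      _ = ∑ i, ∫ ω, F ω i * g m ω i ∂μ := integral_finset_sum _ (fun i _ => hFgi i)
      _ = ∑ i, ∫ ω, F ω i * F ω i ∂μ := Finset.sum_congr rfl (fun i _ => hcoord i)
      _ = ∫ ω, ∑ i, F ω i * F ω i ∂μ := (integral_finset_sum _ (fun i _ => hFFi i)).symm
      _ = ∫ ω, ‖F ω‖ ^ 2 ∂μ := by simp_rw [hsum2]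
  -- integrability of J along the iterates and of the inner products
  have hJint : ∀ m, Integrable (fun ω => J (θ m ω)) μ := by
    intro m
    refine (integrable_const B).mono'
      ((hJdiff.continuous.comp_stronglyMeasurable (hθsm m)).aestronglyMeasurable) ?_
    filter_upwards with ω
    rw [Real.norm_eq_abs]
    exact hJbdd _
  have hinnerInt : ∀ m : ℕ, 1 ≤ m →
      Integrable (fun ω => (inner ℝ (gradient J (θ m ω)) (g m ω) : ℝ)) μ := by
    intro m hm
    refine (integrable_const (C m * ℓ)).mono' ((hFsm0 m).inner (hgsm m).aestronglyMeasurable) ?_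
    filter_upwards [hgradbdd m hm, hgbdd m] with ω h1 h2
    rw [Real.norm_eq_abs]
    calc |(inner ℝ (gradient J (θ m ω)) (g m ω) : ℝ)|
        ≤ ‖gradient J (θ m ω)‖ * ‖g m ω‖ := abs_real_inner_le_norm _ _
      _ ≤ C m * ℓ := mul_le_mul h1 h2 (norm_nonneg _) (hCnonneg m)
  -- the one-step inequality
  have hstep : ∀ m : ℕ, 1 ≤ m →
      α * ∫ ω, ‖gradient J (θ m ω)‖ ^ 2 ∂μ ≤
        (∫ ω, J (θ (m + 1) ω) ∂μ) - (∫ ω, J (θ m ω) ∂μ) + L * α ^ 2 * ℓ ^ 2 := by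
    intro m hm
    have hpt : ∀ᵐ ω ∂μ,
        J (θ m ω) + α * (inner ℝ (gradient J (θ m ω)) (g m ω) : ℝ) - L * α ^ 2 * ℓ ^ 2
          ≤ J (θ (m + 1) ω) := by
      filter_upwards [hgbdd m] with ω hg
      have hd := descent_aux hL.le hJdiff hJLip (θ m ω) (θ (m + 1) ω)
      rw [hupdate m hm ω] at hd ⊢
      rw [add_sub_cancel_left, real_inner_smul_right] at hd
      have h2 : ‖α • g m ω‖ ^ 2 ≤ α ^ 2 * ℓ ^ 2 := by
        rw [norm_smul, Real.norm_eq_abs, abs_of_pos hαpos, mul_pow]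
        have h2' : ‖g m ω‖ ^ 2 ≤ ℓ ^ 2 := pow_le_pow_left₀ (norm_nonneg _) hg 2
        exact mul_le_mul_of_nonneg_left h2' (sq_nonneg α)
      have h3 : L * ‖α • g m ω‖ ^ 2 ≤ L * (α ^ 2 * ℓ ^ 2) :=
        mul_le_mul_of_nonneg_left h2 hL.le
      have h4 := (abs_le.mp hd).1
      nlinarith
    have hInt1 : Integrable (fun ω =>
        J (θ m ω) + α * (inner ℝ (gradient J (θ m ω)) (g m ω) : ℝ)) μ :=
      (hJint m).add ((hinnerInt m hm).const_mul α)
    have hRHSint : Integrable (fun ω =>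
        J (θ m ω) + α * (inner ℝ (gradient J (θ m ω)) (g m ω) : ℝ) - L * α ^ 2 * ℓ ^ 2) μ :=
      hInt1.sub (integrable_const _)
    have hint := integral_mono_ae hRHSint (hJint (m + 1)) hpt
    rw [integral_sub hInt1 (integrable_const _),
      integral_add (hJint m) ((hinnerInt m hm).const_mul α),
      integral_const, integral_const_mul, hinner m hm] at hint
    simp only [measure_univ, probReal_univ, ENNReal.toReal_one, smul_eq_mul, one_mul] at hint
    linarith
  -- telescoping
  have hmain : ∀ k : ℕ,
      α * ∑ m ∈ Finset.Icc 1 k, ∫ ω, ‖gradient J (θ m ω)‖ ^ 2 ∂μ ≤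
        (∫ ω, J (θ (k + 1) ω) ∂μ) - (∫ ω, J (θ 1 ω) ∂μ) + k * (L * α ^ 2 * ℓ ^ 2) := by
    intro k
    induction k with
    | zero => simp
    | succ k ih =>
      rw [Finset.sum_Icc_succ_top (Nat.le_add_left 1 k), mul_add]
      have h1 := hstep (k + 1) (Nat.le_add_left 1 k)
      push_cast
      push_cast at ih
      linarith
  have hEb : ∀ m, |∫ ω, J (θ m ω) ∂μ| ≤ B := by
    intro m
    calc |∫ ω, J (θ m ω) ∂μ| ≤ ∫ ω, ‖J (θ m ω)‖ ∂μ := by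
          rw [← Real.norm_eq_abs]; exact norm_integral_le_integral_norm _
      _ ≤ ∫ ω, B ∂μ := by
          refine integral_mono_ae (hJint m).norm (integrable_const B) ?_
          filter_upwards with ω
          rw [Real.norm_eq_abs]
          exact hJbdd _
      _ = B := by simp
  -- conclusion
  intro k hk
  have hk0 : (0 : ℝ) < k := by exact_mod_cast hk
  set S := ∑ m ∈ Finset.Icc 1 k, ∫ ω, ‖gradient J (θ m ω)‖ ^ 2 ∂μ with hS
  have h1 : α * S ≤ 2 * B + k * (L * α ^ 2 * ℓ ^ 2) := by
    have h2 := hmain k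
    have h3 := abs_le.mp (hEb (k + 1))
    have h4 := abs_le.mp (hEb 1)
    linarith [h2, h3.2, h4.1]
  have hαk : (0 : ℝ) < α * k := by positivity
  have key : 1 / (k : ℝ) * S = (α * S) / (α * k) := by field_simp
  have key2 : 2 * B / (α * k) + L * α * ℓ ^ 2
      = (2 * B + k * (L * α ^ 2 * ℓ ^ 2)) / (α * k) := by
    field_simp
  rw [key, key2]
  gcongr
end

section
/- In the abstract stochastic gradient ascent setting, assume additionally that |J(θ)| ≤ B for all θ and that the stepsizes satisfy the Robbins–Monro conditions α_k > 0, ∑_{k=0}^∞ α_k = ∞ and ∑_{k=0}^∞ α_k² < ∞. Then ∑_{k=0}^∞ α_k ‖∇J(θ_k)‖² < ∞ almost surely. -/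
/-!
The descent lemma for a function with `L`-Lipschitz gradient gives, pathwise,
`α_k ⟪∇J(θ_k), g_k⟫ ≤ J(θ_{k+1}) - J(θ_k) + L ℓ² α_k²`. Taking expectations and pulling the
`F_k`-measurable factor `∇J(θ_k)` out of `E[g_k | F_k] = ∇J(θ_k)` turns the left side into
`α_k E‖∇J(θ_k)‖²`, so the partial sums of `α_k E‖∇J(θ_k)‖²` telescope and stay below
`2B + L ℓ² ∑ α_k²`. Thus `E[∑ α_k ‖∇J(θ_k)‖²] < ∞`, and the series converges almost surely.
-/

open MeasureTheory Filter Topology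

open scoped RealInnerProductSpace

theorem summable_of_le_sub_add {a u c : ℕ → ℝ} {B : ℝ} (ha : ∀ k, 0 ≤ a k)
    (hu : ∀ k, |u k| ≤ B) (hc : Summable c) (hc₀ : ∀ k, 0 ≤ c k)
    (h : ∀ k, a k ≤ u (k + 1) - u k + c k) : Summable a := by
  refine summable_of_sum_range_le ha (c := 2 * B + ∑' k, c k) fun n => ?_
  have hc_le : ∑ k ∈ Finset.range n, c k ≤ ∑' k, c k := hc.sum_le_tsum _ fun k _ => hc₀ k
  calc ∑ k ∈ Finset.range n, a k ≤ ∑ k ∈ Finset.range n, (u (k + 1) - u k + c k) :=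
        Finset.sum_le_sum fun k _ => h k
    _ = u n - u 0 + ∑ k ∈ Finset.range n, c k := by
        rw [Finset.sum_add_distrib, Finset.sum_range_sub]
    _ ≤ 2 * B + ∑' k, c k := by linarith [abs_le.mp (hu n), abs_le.mp (hu 0)]

theorem ae_summable_of_summable_integral {Ω : Type*} {mΩ : MeasurableSpace Ω} {μ : Measure Ω}
    {f : ℕ → Ω → ℝ} (hf₀ : ∀ n ω, 0 ≤ f n ω) (hf : ∀ n, Integrable (f n) μ)
    (hsum : Summable fun n => ∫ ω, f n ω ∂μ) : ∀ᵐ ω ∂μ, Summable fun n => f n ω := by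
  have heLp : ∀ n, eLpNorm (f n) 1 μ = ENNReal.ofReal (∫ ω, f n ω ∂μ) := fun n => by
    rw [eLpNorm_one_eq_lintegral_enorm, ofReal_integral_eq_lintegral_ofReal (hf n)
      (ae_of_all _ (hf₀ n))]
    simp only [Real.enorm_of_nonneg (hf₀ n _)]
  have hfin : ∑' n, eLpNorm (f n) 1 μ ≠ ⊤ := by
    simp only [heLp]
    rw [← ENNReal.ofReal_tsum_of_nonneg (fun n => integral_nonneg (hf₀ n)) hsum]
    exact ENNReal.ofReal_ne_top
  filter_upwards [summable_norm_of_tsum_eLpNorm_ne_top le_rfl (fun n => (hf n).1) hfin]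
    with ω hω
  simpa only [Real.norm_of_nonneg (hf₀ _ ω)] using hω

section InnerProductSpace

variable {E : Type*} [NormedAddCommGroup E] [InnerProductSpace ℝ E] [CompleteSpace E]
  {Ω : Type*} {m mΩ : MeasurableSpace Ω} {μ : Measure Ω} {X Y : Ω → E}

theorem abs_sub_sub_inner_gradient_le {L : ℝ} (hL : 0 ≤ L) {J : E → ℝ} (hJ : Differentiable ℝ J)
    (hJ' : ∀ x y, ‖gradient J x - gradient J y‖ ≤ L * ‖x - y‖) (x y : E) :
    |J y - J x - ⟪gradient J x, y - x⟫| ≤ L * ‖y - x‖ ^ 2 := by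
  have hfderiv : ∀ z ∈ Metric.closedBall x ‖y - x‖,
      ‖fderiv ℝ J z - InnerProductSpace.toDual ℝ E (gradient J x)‖ ≤ L * ‖y - x‖ := by
    intro z hz
    rw [← toDual_gradient, ← map_sub, LinearIsometryEquiv.norm_map]
    calc ‖gradient J z - gradient J x‖ ≤ L * ‖z - x‖ := hJ' z x
      _ ≤ L * ‖y - x‖ := by gcongr; simpa [dist_eq_norm] using hz
  have h := (convex_closedBall x ‖y - x‖).norm_image_sub_le_of_norm_fderiv_le'
    (fun z _ => hJ z) hfderiv (Metric.mem_closedBall_self (norm_nonneg _))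
    (Metric.mem_closedBall.mpr (dist_eq_norm y x).le)
  rw [InnerProductSpace.toDual_apply_apply, Real.norm_eq_abs] at h
  linarith

theorem ae_norm_le_of_condExp_ae_eq {C : ℝ} (hY : ∀ᵐ ω ∂μ, ‖Y ω‖ ≤ C)
    (h : μ[Y | m] =ᵐ[μ] X) : ∀ᵐ ω ∂μ, ‖X ω‖ ≤ C := by
  filter_upwards [ae_bdd_norm_condExp_of_ae_bdd_norm hY, h] with ω hω hXω
  rwa [← hXω]

theorem integrable_norm_sq_of_condExp_ae_eq [IsFiniteMeasure μ] {C : ℝ}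
    (hY : ∀ᵐ ω ∂μ, ‖Y ω‖ ≤ C) (h : μ[Y | m] =ᵐ[μ] X) :
    Integrable (fun ω => ‖X ω‖ ^ 2) μ := by
  refine Integrable.of_bound ((integrable_condExp.congr h).aestronglyMeasurable.norm.pow 2)
    (C ^ 2) ?_
  filter_upwards [ae_norm_le_of_condExp_ae_eq hY h] with ω hω
  simpa using pow_le_pow_left₀ (norm_nonneg _) hω 2

theorem integral_inner_eq_integral_norm_sq_of_condExp_ae_eq [IsFiniteMeasure μ] (hm : m ≤ mΩ)
    (hXY : Integrable (fun ω => ⟪X ω, Y ω⟫) μ) (hY : Integrable Y μ) (h : μ[Y | m] =ᵐ[μ] X) :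
    ∫ ω, ⟪X ω, Y ω⟫ ∂μ = ∫ ω, ‖X ω‖ ^ 2 ∂μ := by
  have hX : AEStronglyMeasurable[m] X μ :=
    stronglyMeasurable_condExp.aestronglyMeasurable.congr h
  calc ∫ ω, ⟪X ω, Y ω⟫ ∂μ = ∫ ω, (μ[fun ω => ⟪X ω, Y ω⟫ | m]) ω ∂μ :=
        (integral_condExp hm).symm
    _ = ∫ ω, ⟪X ω, (μ[Y | m]) ω⟫ ∂μ :=
        integral_congr_ae (condExp_bilin_of_aestronglyMeasurable_left (innerSL ℝ) hX hXY hY)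
    _ = ∫ ω, ‖X ω‖ ^ 2 ∂μ :=
        integral_congr_ae (h.mono fun ω hω => by dsimp only; rw [hω, real_inner_self_eq_norm_sq])

theorem mul_integral_norm_gradient_sq_le [IsProbabilityMeasure μ] (hm : m ≤ mΩ) {L ℓ B : ℝ}
    (hL : 0 ≤ L) {J : E → ℝ} (hJ : Differentiable ℝ J)
    (hJ' : ∀ x y, ‖gradient J x - gradient J y‖ ≤ L * ‖x - y‖) (hJB : ∀ x, |J x| ≤ B)
    {x v : Ω → E} (hx : AEStronglyMeasurable x μ) (hv : AEStronglyMeasurable v μ)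
    (hv_bdd : ∀ᵐ ω ∂μ, ‖v ω‖ ≤ ℓ) (hcond : μ[v | m] =ᵐ[μ] fun ω => gradient J (x ω)) (a : ℝ) :
    a * ∫ ω, ‖gradient J (x ω)‖ ^ 2 ∂μ
      ≤ ∫ ω, J (x ω + a • v ω) ∂μ - ∫ ω, J (x ω) ∂μ + L * ℓ ^ 2 * a ^ 2 := by
  have hJ_int : ∀ {y : Ω → E}, AEStronglyMeasurable y μ → Integrable (fun ω => J (y ω)) μ :=
    fun hy => .of_bound (hJ.continuous.comp_aestronglyMeasurable hy) B
      (ae_of_all _ fun ω => hJB _)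
  have hJ_next : Integrable (fun ω => J (x ω + a • v ω)) μ := hJ_int (hx.add (hv.const_smul a))
  have hJ_diff : Integrable (fun ω => J (x ω + a • v ω) - J (x ω)) μ := hJ_next.sub (hJ_int hx)
  have hgrad_bdd := ae_norm_le_of_condExp_ae_eq hv_bdd hcond
  have hinner_int : Integrable (fun ω => ⟪gradient J (x ω), v ω⟫) μ := by
    refine .of_bound ((integrable_condExp.congr hcond).aestronglyMeasurable.inner hv) (ℓ * ℓ) ?_
    filter_upwards [hgrad_bdd, hv_bdd] with ω hgrad hvω
    exact (norm_inner_le_norm _ _).trans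
      (mul_le_mul hgrad hvω (norm_nonneg _) ((norm_nonneg _).trans hgrad))
  have hstep : ∀ᵐ ω ∂μ, a * ⟪gradient J (x ω), v ω⟫
      ≤ J (x ω + a • v ω) - J (x ω) + L * ℓ ^ 2 * a ^ 2 := by
    filter_upwards [hv_bdd] with ω hvω
    have hdescent :=
      (abs_le.mp (abs_sub_sub_inner_gradient_le hL hJ hJ' (x ω) (x ω + a • v ω))).1
    rw [add_sub_cancel_left, real_inner_smul_right, norm_smul, mul_pow, Real.norm_eq_abs,
      sq_abs] at hdescent
    have : L * (a ^ 2 * ‖v ω‖ ^ 2) ≤ L * ℓ ^ 2 * a ^ 2 := by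
      rw [mul_assoc, mul_comm (ℓ ^ 2)]
      gcongr
    linarith
  calc a * ∫ ω, ‖gradient J (x ω)‖ ^ 2 ∂μ = ∫ ω, a * ⟪gradient J (x ω), v ω⟫ ∂μ := by
        rw [integral_const_mul, integral_inner_eq_integral_norm_sq_of_condExp_ae_eq hm
          hinner_int (.of_bound hv ℓ hv_bdd) hcond]
    _ ≤ ∫ ω, (J (x ω + a • v ω) - J (x ω) + L * ℓ ^ 2 * a ^ 2) ∂μ :=
        integral_mono_ae (hinner_int.const_mul a) (hJ_diff.add (integrable_const _)) hstep
    _ = ∫ ω, J (x ω + a • v ω) ∂μ - ∫ ω, J (x ω) ∂μ + L * ℓ ^ 2 * a ^ 2 := by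
        rw [integral_add hJ_diff (integrable_const _), integral_sub hJ_next (hJ_int hx),
          integral_const]
        simp

end InnerProductSpace

theorem rpg_weighted_gradient_sum_summable_general
    {d : ℕ}
    {Ω : Type*} {mΩ : MeasurableSpace Ω} {μ : Measure Ω} [IsProbabilityMeasure μ]
    (ℱ : Filtration ℕ mΩ)
    (L ℓ B : ℝ) (hL : 0 < L)
    (J : EuclideanSpace ℝ (Fin d) → ℝ)
    (hJdiff : Differentiable ℝ J)
    (hJLip : ∀ x y : EuclideanSpace ℝ (Fin d),
      ‖gradient J x - gradient J y‖ ≤ L * ‖x - y‖)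
    (hJbdd : ∀ x, |J x| ≤ B)
    (θ g : ℕ → Ω → EuclideanSpace ℝ (Fin d))
    (hθadapted : Adapted ℱ θ)
    (hgmeas : ∀ k, StronglyMeasurable[ℱ (k + 1)] (g k))
    (α : ℕ → ℝ) (hαpos : ∀ k, 0 < α k)
    (hαsq : Summable fun k => (α k) ^ 2)
    (hupdate : ∀ k ω, θ (k + 1) ω = θ k ω + α k • g k ω)
    (hunbiased : ∀ k, μ[g k | ℱ k] =ᵐ[μ] fun ω => gradient J (θ k ω))
    (hgbdd : ∀ k, ∀ᵐ ω ∂μ, ‖g k ω‖ ≤ ℓ) :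
    ∀ᵐ ω ∂μ, Summable fun k => α k * ‖gradient J (θ k ω)‖ ^ 2 := by
  have hstep : ∀ k, α k * ∫ ω, ‖gradient J (θ k ω)‖ ^ 2 ∂μ
      ≤ ∫ ω, J (θ (k + 1) ω) ∂μ - ∫ ω, J (θ k ω) ∂μ + L * ℓ ^ 2 * α k ^ 2 := fun k => by
    simpa only [hupdate] using mul_integral_norm_gradient_sq_le (ℱ.le k) hL.le hJdiff hJLip hJbdd
      ((hθadapted k).mono (ℱ.le k) le_rfl).aestronglyMeasurable
      ((hgmeas k).mono (ℱ.le (k + 1))).aestronglyMeasurable (hgbdd k) (hunbiased k) (α k)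
  have hmean_bdd : ∀ k, |∫ ω, J (θ k ω) ∂μ| ≤ B := fun k => by
    simpa using norm_integral_le_of_norm_le_const (μ := μ)
      (ae_of_all _ fun ω => (Real.norm_eq_abs _).trans_le (hJbdd (θ k ω)))
  have hsum : Summable fun k => α k * ∫ ω, ‖gradient J (θ k ω)‖ ^ 2 ∂μ :=
    summable_of_le_sub_add
      (fun k => mul_nonneg (hαpos k).le (integral_nonneg fun _ => sq_nonneg _))
      hmean_bdd (hαsq.mul_left _) (fun k => by positivity) hstep
  refine ae_summable_of_summable_integral (fun k ω => mul_nonneg (hαpos k).le (sq_nonneg _))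
    (fun k => (integrable_norm_sq_of_condExp_ae_eq (hgbdd k) (hunbiased k)).const_mul _) ?_
  simpa only [integral_const_mul] using hsum

/-- Under the Robbins–Monro stepsize conditions and boundedness of `J`,
the weighted sum `∑_k α_k ‖∇J(θ_k)‖²` is finite almost surely. -/
theorem rpg_weighted_gradient_sum_summable
    {d : ℕ} (hd : 1 ≤ d)
    {Ω : Type*} {mΩ : MeasurableSpace Ω} {μ : Measure Ω} [IsProbabilityMeasure μ]
    (ℱ : Filtration ℕ mΩ)
    (L ℓ B : ℝ) (hL : 0 < L) (hℓ : 0 < ℓ)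
    (J : EuclideanSpace ℝ (Fin d) → ℝ)
    (hJdiff : Differentiable ℝ J)
    (hJLip : ∀ x y : EuclideanSpace ℝ (Fin d),
      ‖gradient J x - gradient J y‖ ≤ L * ‖x - y‖)
    (hJbdd : ∀ x, |J x| ≤ B)
    (θ g : ℕ → Ω → EuclideanSpace ℝ (Fin d))
    (x₀ : EuclideanSpace ℝ (Fin d)) (hθ0 : θ 0 = fun _ => x₀)
    (hθadapted : Adapted ℱ θ)
    (hgmeas : ∀ k, StronglyMeasurable[ℱ (k + 1)] (g k))
    (α : ℕ → ℝ) (hαpos : ∀ k, 0 < α k)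
    (hαdiv : Tendsto (fun n => ∑ k ∈ Finset.range n, α k) atTop atTop)
    (hαsq : Summable fun k => (α k) ^ 2)
    (hupdate : ∀ k ω, θ (k + 1) ω = θ k ω + α k • g k ω)
    (hunbiased : ∀ k, μ[g k | ℱ k] =ᵐ[μ] fun ω => gradient J (θ k ω))
    (hgbdd : ∀ k, ∀ᵐ ω ∂μ, ‖g k ω‖ ≤ ℓ) :
    ∀ᵐ ω ∂μ, Summable fun k => α k * ‖gradient J (θ k ω)‖ ^ 2 :=
  rpg_weighted_gradient_sum_summable_general ℱ L ℓ B hL J hJdiff hJLip hJbdd θ g hθadapted hgmeas α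
    hαpos hαsq hupdate hunbiased hgbdd
end

section
/- In the two-stepsize stochastic gradient ascent setting, suppose the starting point has a large gradient, ‖∇J(θ_0)‖ ≥ ε for some ε > 0, and that the stepsizes satisfy k_thre · α² ≤ β² and 2 L ℓ² β ≤ ε². Then after one enlarged step of size β followed by k_thre − 1 steps of size α, the expected objective value increases substantially: E[J(θ_{k_thre})] − J(θ_0) ≥ β ‖∇J(θ_0)‖² / 2 ≥ β ε² / 2. -/
open MeasureTheory Filter Topology InnerProductSpace

section helpers
variable {F : Type*} [NormedAddCommGroup F] [InnerProductSpace ℝ F] [CompleteSpace F]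

lemma mrpg_gradient_continuous {J : F → ℝ} {L : ℝ}
    (hLip : ∀ x y, ‖gradient J x - gradient J y‖ ≤ L * ‖x - y‖) :
    Continuous (fun z => gradient J z) := by
  have : LipschitzWith (Real.toNNReal L) (fun z => gradient J z) := by
    intro a b
    rw [edist_nndist, edist_nndist, ← ENNReal.coe_mul, ENNReal.coe_le_coe,
      ← NNReal.coe_le_coe]
    push_cast
    rw [dist_eq_norm, dist_eq_norm]
    calc ‖gradient J a - gradient J b‖ ≤ L * ‖a - b‖ := hLip a b
      _ ≤ Real.toNNReal L * ‖a - b‖ := by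
          gcongr; exact Real.le_coe_toNNReal L
  exact this.continuous

lemma mrpg_descent {J : F → ℝ} (hJ : Differentiable ℝ J) {L : ℝ}
    (hLip : ∀ x y, ‖gradient J x - gradient J y‖ ≤ L * ‖x - y‖) (x v : F) :
    J x + ⟪gradient J x, v⟫_ℝ - L / 2 * ‖v‖ ^ 2 ≤ J (x + v) := by
  have hgcont : Continuous (fun z => gradient J z) := mrpg_gradient_continuous hLip
  have hderiv : ∀ t : ℝ, HasDerivAt (fun t : ℝ => J (x + t • v))
      (⟪gradient J (x + t • v), v⟫_ℝ) t := by
    intro t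
    have h1 : HasFDerivAt J (toDual ℝ F (gradient J (x + t • v))) (x + t • v) :=
      (hJ (x + t • v)).hasGradientAt
    have h2 : HasDerivAt (fun t : ℝ => x + t • v) v t := by
      simpa using ((hasDerivAt_id t).smul_const v).const_add x
    exact h1.comp_hasDerivAt t h2
  have hcont : Continuous (fun t : ℝ => ⟪gradient J (x + t • v), v⟫_ℝ) :=
    continuous_inner.comp ((hgcont.comp (by continuity)).prodMk continuous_const)
  have hint : ∫ t in (0:ℝ)..1, ⟪gradient J (x + t • v), v⟫_ℝ = J (x + v) - J x := by
    have := intervalIntegral.integral_eq_sub_of_hasDerivAt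
      (f := fun t : ℝ => J (x + t • v))
      (fun t _ => hderiv t) (hcont.intervalIntegrable 0 1)
    simpa using this
  have hmono : ∫ t in (0:ℝ)..1, (⟪gradient J x, v⟫_ℝ - L * t * ‖v‖ ^ 2)
      ≤ ∫ t in (0:ℝ)..1, ⟪gradient J (x + t • v), v⟫_ℝ := by
    apply intervalIntegral.integral_mono_on (by norm_num)
    · exact (Continuous.intervalIntegrable (by fun_prop) 0 1)
    · exact hcont.intervalIntegrable 0 1
    · intro t ht
      have h1 : ⟪gradient J x, v⟫_ℝ - ⟪gradient J (x + t • v), v⟫_ℝ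
          = ⟪gradient J x - gradient J (x + t • v), v⟫_ℝ := by
        rw [inner_sub_left]
      have h2 : ⟪gradient J x - gradient J (x + t • v), v⟫_ℝ ≤ L * t * ‖v‖ ^ 2 := by
        calc ⟪gradient J x - gradient J (x + t • v), v⟫_ℝ
            ≤ ‖gradient J x - gradient J (x + t • v)‖ * ‖v‖ := real_inner_le_norm _ _
          _ ≤ (L * ‖x - (x + t • v)‖) * ‖v‖ := by gcongr; exact hLip _ _
          _ = L * t * ‖v‖ ^ 2 := by
              have : ‖x - (x + t • v)‖ = t * ‖v‖ := by
                simp [norm_smul, abs_of_nonneg ht.1]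
              rw [this]; ring
      linarith
  have hval : ∫ t in (0:ℝ)..1, (⟪gradient J x, v⟫_ℝ - L * t * ‖v‖ ^ 2)
      = ⟪gradient J x, v⟫_ℝ - L / 2 * ‖v‖ ^ 2 := by
    rw [intervalIntegral.integral_sub (by apply Continuous.intervalIntegrable; fun_prop)
      (by apply Continuous.intervalIntegrable; fun_prop)]
    have he : (fun t : ℝ => L * t * ‖v‖ ^ 2) = fun t : ℝ => (L * ‖v‖ ^ 2) * t := by
      ext t; ring
    rw [he, intervalIntegral.integral_const_mul, integral_id, intervalIntegral.integral_const]
    norm_num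
    ring
  nlinarith [hint, hmono, hval]

end helpers

lemma mrpg_coord_le_norm {d : ℕ} (x : EuclideanSpace ℝ (Fin d)) (i : Fin d) : |x i| ≤ ‖x‖ := by
  rw [EuclideanSpace.norm_eq]
  rw [← Real.sqrt_sq_eq_abs]
  apply Real.sqrt_le_sqrt
  have : |x i| ^ 2 ≤ ∑ j, ‖x j‖ ^ 2 := by
    have := Finset.single_le_sum (f := fun j => ‖x j‖ ^ 2)
      (fun j _ => by positivity) (Finset.mem_univ i)
    simpa [Real.norm_eq_abs] using this
  simpa [sq_abs] using this

lemma mrpg_integral_inner_eq {Ω : Type*} {m : MeasurableSpace Ω} {mΩ : MeasurableSpace Ω}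
    {μ : Measure Ω} [IsProbabilityMeasure μ] (hm : m ≤ mΩ)
    {d : ℕ} (F G : Ω → EuclideanSpace ℝ (Fin d))
    (hF : StronglyMeasurable[m] F) (hGm : AEStronglyMeasurable G μ)
    {C c : ℝ} (hFbdd : ∀ᵐ ω ∂μ, ‖F ω‖ ≤ C) (hGbdd : ∀ᵐ ω ∂μ, ‖G ω‖ ≤ c)
    (hcond : μ[G | m] =ᵐ[μ] F) :
    ∫ ω, ⟪F ω, G ω⟫_ℝ ∂μ = ∫ ω, ⟪F ω, F ω⟫_ℝ ∂μ := by

  have hC : 0 ≤ C := by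
    by_contra h
    push_neg at h
    have h2 : ∀ᵐ ω ∂μ, False := by
      filter_upwards [hFbdd] with ω hω
      exact absurd (le_trans (norm_nonneg _) hω) (not_le.2 h)
    rw [ae_iff] at h2
    simp only [not_false_iff, Set.setOf_true] at h2
    exact (IsProbabilityMeasure.ne_zero μ) (by simpa [measure_univ] using h2)
  have hGint : Integrable G μ := Integrable.mono' (integrable_const c) hGm hGbdd
  have hFint : Integrable F μ := (integrable_condExp (f := G) (m := m)).congr hcond
  have hFaesm : AEStronglyMeasurable F μ := (hF.mono hm).aestronglyMeasurable
  -- coordinates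
  set Fi : Fin d → Ω → ℝ := fun i ω => F ω i with hFi_def
  set Gi : Fin d → Ω → ℝ := fun i ω => G ω i with hGi_def
  have hFim : ∀ i, StronglyMeasurable[m] (Fi i) := fun i =>
    (EuclideanSpace.proj (𝕜 := ℝ) i).continuous.comp_stronglyMeasurable hF
  have hGiint : ∀ i, Integrable (Gi i) μ :=
    fun i => (EuclideanSpace.proj (𝕜 := ℝ) i).integrable_comp hGint
  have hFiint : ∀ i, Integrable (Fi i) μ :=
    fun i => (EuclideanSpace.proj (𝕜 := ℝ) i).integrable_comp hFint
  have hFibdd : ∀ i, ∀ᵐ ω ∂μ, ‖Fi i ω‖ ≤ C := by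
    intro i
    filter_upwards [hFbdd] with ω hω
    exact le_trans (by simpa [Real.norm_eq_abs] using mrpg_coord_le_norm (F ω) i) hω
  have hGibdd : ∀ i, ∀ᵐ ω ∂μ, ‖Gi i ω‖ ≤ c := by
    intro i
    filter_upwards [hGbdd] with ω hω
    exact le_trans (by simpa [Real.norm_eq_abs] using mrpg_coord_le_norm (G ω) i) hω
  -- coordinate conditional expectations
  have hcondi : ∀ i, (Fi i) =ᵐ[μ] μ[Gi i | m] := by
    intro i
    refine ae_eq_condExp_of_forall_setIntegral_eq hm (hGiint i)
      (fun s _ _ => (hFiint i).integrableOn) (fun s hs hμs => ?_)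
      ((hFim i).aestronglyMeasurable)
    have h1 : EuclideanSpace.proj (𝕜 := ℝ) i (∫ ω in s, F ω ∂μ) = ∫ ω in s, Fi i ω ∂μ :=
      ((EuclideanSpace.proj (𝕜 := ℝ) i).integral_comp_comm (hFint.restrict (s := s))).symm
    have h2 : EuclideanSpace.proj (𝕜 := ℝ) i (∫ ω in s, G ω ∂μ) = ∫ ω in s, Gi i ω ∂μ :=
      ((EuclideanSpace.proj (𝕜 := ℝ) i).integral_comp_comm (hGint.restrict (s := s))).symm
    have h3 : ∫ ω in s, F ω ∂μ = ∫ ω in s, G ω ∂μ := by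
      rw [← setIntegral_condExp hm hGint hs]
      exact setIntegral_congr_ae (hm s hs) (hcond.mono fun ω hω _ => hω.symm)
    rw [← h1, ← h2, h3]
  -- pull-out
  have hFGi_int : ∀ i, Integrable (fun ω => Fi i ω * Gi i ω) μ := by
    intro i
    refine Integrable.mono' (integrable_const (C * c))
      (((hFim i).mono hm).aestronglyMeasurable.mul (hGiint i).1) ?_
    filter_upwards [hFibdd i, hGibdd i] with ω h1 h2
    calc ‖Fi i ω * Gi i ω‖ = ‖Fi i ω‖ * ‖Gi i ω‖ := by rw [norm_mul]
      _ ≤ C * c := mul_le_mul h1 h2 (norm_nonneg _) hC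
  have key : ∀ i, ∫ ω, Fi i ω * Gi i ω ∂μ = ∫ ω, Fi i ω * Fi i ω ∂μ := by
    intro i
    have hpull := condExp_stronglyMeasurable_mul_of_bound hm (hFim i) (hGiint i) C (hFibdd i)
    calc ∫ ω, Fi i ω * Gi i ω ∂μ = ∫ ω, (μ[(Fi i) * (Gi i) | m]) ω ∂μ :=
          (integral_condExp hm).symm
      _ = ∫ ω, Fi i ω * (μ[Gi i | m]) ω ∂μ := integral_congr_ae hpull
      _ = ∫ ω, Fi i ω * Fi i ω ∂μ := by
          refine integral_congr_ae ?_
          filter_upwards [hcondi i] with ω hω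
          rw [← hω]
  -- sum over coordinates
  have hinner : ∀ (x y : EuclideanSpace ℝ (Fin d)), ⟪x, y⟫_ℝ = ∑ i, x i * y i := by
    intro x y
    simp [PiLp.inner_apply, RCLike.inner_apply, mul_comm]
  calc ∫ ω, ⟪F ω, G ω⟫_ℝ ∂μ = ∫ ω, ∑ i, Fi i ω * Gi i ω ∂μ := by
        simp_rw [hinner]; rfl
    _ = ∑ i, ∫ ω, Fi i ω * Gi i ω ∂μ := integral_finset_sum _ (fun i _ => hFGi_int i)
    _ = ∑ i, ∫ ω, Fi i ω * Fi i ω ∂μ := by simp_rw [key]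
    _ = ∫ ω, ∑ i, Fi i ω * Fi i ω ∂μ := (integral_finset_sum _ (fun i _ => by
          refine Integrable.mono' (integrable_const (C * C))
            (((hFim i).mono hm).aestronglyMeasurable.mul (hFiint i).1) ?_
          filter_upwards [hFibdd i] with ω hω
          calc ‖Fi i ω * Fi i ω‖ = ‖Fi i ω‖ * ‖Fi i ω‖ := by rw [norm_mul]
            _ ≤ C * C := mul_le_mul hω hω (norm_nonneg _) hC)).symm
    _ = ∫ ω, ⟪F ω, F ω⟫_ℝ ∂μ := by simp_rw [hinner]; rfl

set_option maxHeartbeats 1000000 in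
/-- Large-gradient regime of the two-stepsize (Modified RPG) iteration:
if `‖∇J(θ_0)‖ ≥ ε`, `k_thre·α² ≤ β²` and `2Lℓ²β ≤ ε²`, then one enlarged step of size `β`
followed by `k_thre − 1` steps of size `α` increases the objective in expectation by at
least `β‖∇J(θ_0)‖²/2 ≥ βε²/2`. -/
theorem mrpg_large_gradient_increase
    {d : ℕ} (hd : 1 ≤ d)
    {Ω : Type*} {mΩ : MeasurableSpace Ω} {μ : Measure Ω} [IsProbabilityMeasure μ]
    (ℱ : Filtration ℕ mΩ)
    (L ℓ : ℝ) (hL : 0 < L) (hℓ : 0 < ℓ)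
    (J : EuclideanSpace ℝ (Fin d) → ℝ)
    (hJdiff : Differentiable ℝ J)
    (hJLip : ∀ x y : EuclideanSpace ℝ (Fin d),
      ‖gradient J x - gradient J y‖ ≤ L * ‖x - y‖)
    (θ g : ℕ → Ω → EuclideanSpace ℝ (Fin d))
    (x₀ : EuclideanSpace ℝ (Fin d)) (hθ0 : θ 0 = fun _ => x₀)
    (hθadapted : Adapted ℱ θ)
    (hgmeas : ∀ p, StronglyMeasurable[ℱ (p + 1)] (g p))
    (hunbiased : ∀ p, μ[g p | ℱ p] =ᵐ[μ] fun ω => gradient J (θ p ω))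
    (hgbdd : ∀ p, ∀ᵐ ω ∂μ, ‖g p ω‖ ≤ ℓ)
    (α β : ℝ) (hα : 0 < α) (hαβ : α ≤ β)
    (kthre : ℕ) (hkthre : 1 ≤ kthre)
    (hstep0 : ∀ ω, θ 1 ω = θ 0 ω + β • g 0 ω)
    (hstep : ∀ p : ℕ, 1 ≤ p → p < kthre → ∀ ω, θ (p + 1) ω = θ p ω + α • g p ω)
    (ε : ℝ) (hε : 0 < ε)
    (hgrad : ε ≤ ‖gradient J x₀‖)
    (hαβk : (kthre : ℝ) * α ^ 2 ≤ β ^ 2)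
    (hβε : 2 * L * ℓ ^ 2 * β ≤ ε ^ 2) :
    β * ‖gradient J x₀‖ ^ 2 / 2 ≤ (∫ ω, J (θ kthre ω) ∂μ) - J x₀ ∧
    β * ε ^ 2 / 2 ≤ β * ‖gradient J x₀‖ ^ 2 / 2 := by
  have hβ : 0 < β := lt_of_lt_of_le hα hαβ
  set N := ‖gradient J x₀‖ with hNdef
  have hN : 0 < N := lt_of_lt_of_le hε hgrad
  have part2 : β * ε ^ 2 / 2 ≤ β * N ^ 2 / 2 := by
    have h2 : ε ^ 2 ≤ N ^ 2 := by nlinarith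
    have h3 := mul_le_mul_of_nonneg_left h2 (le_of_lt hβ)
    linarith
  refine ⟨?_, part2⟩
  -- measurability facts
  have hgm : ∀ p, AEStronglyMeasurable (g p) μ := fun p =>
    ((hgmeas p).mono (ℱ.le (p + 1))).aestronglyMeasurable
  have hθm : ∀ p, StronglyMeasurable (θ p) := fun p => (hθadapted p).stronglyMeasurable.mono (ℱ.le p)
  have hgrad_cont : Continuous (fun z => gradient J z) := mrpg_gradient_continuous hJLip
  set Fp : ℕ → Ω → EuclideanSpace ℝ (Fin d) := fun p ω => gradient J (θ p ω) with hFpdef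
  have hFpm : ∀ p, StronglyMeasurable[ℱ p] (Fp p) := fun p =>
    hgrad_cont.comp_stronglyMeasurable (hθadapted p).stronglyMeasurable
  -- a.e. bound on the iterates
  have hθbdd : ∀ p, p ≤ kthre → ∀ᵐ ω ∂μ, ‖θ p ω - x₀‖ ≤ (p : ℝ) * (β * ℓ) := by
    intro p
    induction p with
    | zero => intro _; filter_upwards with ω; simp [hθ0]
    | succ q ih =>
      intro hq
      have hq' : q ≤ kthre := Nat.le_of_succ_le hq
      rcases Nat.eq_zero_or_pos q with h0 | hpos
      · subst h0
        filter_upwards [hgbdd 0] with ω hg0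
        rw [hstep0 ω, hθ0]
        have h1 : (fun _ : Ω => x₀) ω + β • g 0 ω - x₀ = β • g 0 ω := by
          simp
        rw [h1, norm_smul, Real.norm_eq_abs, abs_of_pos hβ]
        push_cast
        nlinarith [norm_nonneg (g 0 ω)]
      · have hlt : q < kthre := Nat.lt_of_succ_le hq
        filter_upwards [ih hq', hgbdd q] with ω hih hgq
        rw [hstep q hpos hlt ω]
        have h1 : θ q ω + α • g q ω - x₀ = (θ q ω - x₀) + α • g q ω := by abel
        rw [h1]
        calc ‖(θ q ω - x₀) + α • g q ω‖ ≤ ‖θ q ω - x₀‖ + ‖α • g q ω‖ := norm_add_le _ _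
          _ ≤ (q : ℝ) * (β * ℓ) + β * ℓ := by
              have h2 : ‖α • g q ω‖ = α * ‖g q ω‖ := by
                rw [norm_smul, Real.norm_eq_abs, abs_of_pos hα]
              rw [h2]
              have h3 : α * ‖g q ω‖ ≤ β * ℓ :=
                mul_le_mul hαβ hgq (norm_nonneg _) (le_of_lt hβ)
              linarith
          _ = ((q + 1 : ℕ) : ℝ) * (β * ℓ) := by push_cast; ring
  -- a.e. bound on the gradients along the trajectory
  have hFbdd : ∀ p, p ≤ kthre → ∀ᵐ ω ∂μ, ‖Fp p ω‖ ≤ N + L * ((p : ℝ) * (β * ℓ)) := by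
    intro p hp
    filter_upwards [hθbdd p hp] with ω hω
    have h1 : ‖Fp p ω - gradient J x₀‖ ≤ L * ‖θ p ω - x₀‖ := hJLip _ _
    have h2 : ‖Fp p ω‖ ≤ ‖gradient J x₀‖ + ‖Fp p ω - gradient J x₀‖ := by
      have := norm_add_le (gradient J x₀) (Fp p ω - gradient J x₀)
      simpa using this
    have h3 : L * ‖θ p ω - x₀‖ ≤ L * ((p : ℝ) * (β * ℓ)) := by
      exact mul_le_mul_of_nonneg_left hω (le_of_lt hL)
    calc ‖Fp p ω‖ ≤ N + ‖Fp p ω - gradient J x₀‖ := h2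
      _ ≤ N + L * ((p : ℝ) * (β * ℓ)) := by linarith
  -- integrability of J along the trajectory
  have hJθ_int : ∀ p, p ≤ kthre → Integrable (fun ω => J (θ p ω)) μ := by
    intro p hp
    set R := (p : ℝ) * (β * ℓ) with hRdef
    have hR : 0 ≤ R := by positivity
    refine Integrable.mono' (integrable_const (|J x₀| + (2 * N + 2 * L * R) * R + L * R ^ 2))
      (hJdiff.continuous.comp_stronglyMeasurable (hθm p)).aestronglyMeasurable ?_
    filter_upwards [hθbdd p hp] with ω hω
    set v := θ p ω - x₀ with hvdef
    have hxv : x₀ + v = θ p ω := by rw [hvdef]; abel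
    have low := mrpg_descent hJdiff hJLip x₀ v
    have high := mrpg_descent hJdiff hJLip (x₀ + v) (-v)
    rw [hxv] at low high
    have hv2 : θ p ω + -v = x₀ := by rw [hvdef]; abel
    rw [hv2] at high
    have hi1 : |⟪gradient J x₀, v⟫_ℝ| ≤ N * ‖v‖ := abs_real_inner_le_norm _ _
    have hi2 : |⟪gradient J (θ p ω), -v⟫_ℝ| ≤ ‖gradient J (θ p ω)‖ * ‖v‖ := by
      have := abs_real_inner_le_norm (gradient J (θ p ω)) (-v)
      simpa using this
    have hgv : ‖gradient J (θ p ω)‖ ≤ N + L * ‖v‖ := by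
      have h1 : ‖gradient J (θ p ω) - gradient J x₀‖ ≤ L * ‖v‖ := by
        have := hJLip (θ p ω) x₀
        rw [← hvdef] at this
        exact this
      have h2 : ‖gradient J (θ p ω)‖ ≤ ‖gradient J x₀‖ + ‖gradient J (θ p ω) - gradient J x₀‖ := by
        have := norm_add_le (gradient J x₀) (gradient J (θ p ω) - gradient J x₀)
        simpa using this
      linarith
    have hnv : ‖-v‖ = ‖v‖ := norm_neg v
    rw [hnv] at high
    rw [Real.norm_eq_abs]
    have hvnn : (0:ℝ) ≤ ‖v‖ := norm_nonneg v
    rw [abs_le]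
    have hvR : ‖v‖ ≤ R := by rw [hRdef]; exact hω
    have e1 : N * ‖v‖ ≤ N * R := mul_le_mul_of_nonneg_left hvR (le_of_lt hN)
    have e2 : ‖v‖ ^ 2 ≤ R ^ 2 := by nlinarith
    have e3 : L * ‖v‖ ^ 2 ≤ L * R ^ 2 := mul_le_mul_of_nonneg_left e2 (le_of_lt hL)
    have e5 : ‖gradient J (θ p ω)‖ * ‖v‖ ≤ (N + L * R) * R := by
      have e5a : ‖gradient J (θ p ω)‖ * ‖v‖ ≤ (N + L * ‖v‖) * ‖v‖ :=
        mul_le_mul_of_nonneg_right hgv hvnn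
      nlinarith
    obtain ⟨hi1l, hi1r⟩ := abs_le.1 hi1
    obtain ⟨hi2l, hi2r⟩ := abs_le.1 hi2
    constructor
    · linarith [le_abs_self (J x₀), neg_abs_le (J x₀), mul_nonneg (le_of_lt hN) hR,
        mul_nonneg (le_of_lt hL) (sq_nonneg R), mul_nonneg (mul_nonneg (le_of_lt hL) hR) hR]
    · linarith [le_abs_self (J x₀), neg_abs_le (J x₀), mul_nonneg (le_of_lt hN) hR,
        mul_nonneg (le_of_lt hL) (sq_nonneg R), mul_nonneg (mul_nonneg (le_of_lt hL) hR) hR]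
  -- integrability of the inner products
  have hinner_int : ∀ p, p ≤ kthre → Integrable (fun ω => ⟪Fp p ω, g p ω⟫_ℝ) μ := by
    intro p hp
    refine Integrable.mono' (integrable_const ((N + L * ((p : ℝ) * (β * ℓ))) * ℓ))
      (AEStronglyMeasurable.inner ((hFpm p).mono (ℱ.le p)).aestronglyMeasurable (hgm p)) ?_
    filter_upwards [hFbdd p hp, hgbdd p] with ω h1 h2
    rw [Real.norm_eq_abs]
    calc |⟪Fp p ω, g p ω⟫_ℝ| ≤ ‖Fp p ω‖ * ‖g p ω‖ := abs_real_inner_le_norm _ _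
      _ ≤ (N + L * ((p : ℝ) * (β * ℓ))) * ℓ := by
          apply mul_le_mul h1 h2 (norm_nonneg _)
          have : (0:ℝ) ≤ L * ((p : ℝ) * (β * ℓ)) := by positivity
          linarith [norm_nonneg (Fp p ω), le_trans (norm_nonneg (Fp p ω)) h1]
  -- value of the step-0 inner product integral
  have hIp : ∀ p, p ≤ kthre →
      ∫ ω, ⟪Fp p ω, g p ω⟫_ℝ ∂μ = ∫ ω, ⟪Fp p ω, Fp p ω⟫_ℝ ∂μ := by
    intro p hp
    exact mrpg_integral_inner_eq (ℱ.le p) (Fp p) (g p) (hFpm p) (hgm p)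
      (hFbdd p hp) (hgbdd p) (hunbiased p)
  have hF0 : Fp 0 = fun _ : Ω => gradient J x₀ := by
    funext ω; simp [hFpdef, hθ0]
  have hI0 : ∫ ω, ⟪Fp 0 ω, g 0 ω⟫_ℝ ∂μ = N ^ 2 := by
    rw [hIp 0 (Nat.zero_le _), hF0, integral_const, probReal_univ]
    simp only [ENNReal.toReal_one, one_smul, smul_eq_mul, one_mul]
    rw [real_inner_self_eq_norm_sq]
  have hIpos : ∀ p, p ≤ kthre → 0 ≤ ∫ ω, ⟪Fp p ω, g p ω⟫_ℝ ∂μ := by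
    intro p hp
    rw [hIp p hp]
    exact integral_nonneg fun ω => real_inner_self_nonneg
  -- step 0 integral inequality
  have hstep1 : J x₀ + β * N ^ 2 - L / 2 * β ^ 2 * ℓ ^ 2 ≤ ∫ ω, J (θ 1 ω) ∂μ := by
    have hptwise : ∀ᵐ ω ∂μ,
        J x₀ + β * ⟪Fp 0 ω, g 0 ω⟫_ℝ - L / 2 * β ^ 2 * ℓ ^ 2 ≤ J (θ 1 ω) := by
      filter_upwards [hgbdd 0] with ω hg0
      have hdesc := mrpg_descent hJdiff hJLip x₀ (β • g 0 ω)
      have hθ1 : θ 1 ω = x₀ + β • g 0 ω := by rw [hstep0 ω, hθ0]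
      rw [hθ1]
      have hin : ⟪gradient J x₀, β • g 0 ω⟫_ℝ = β * ⟪gradient J x₀, g 0 ω⟫_ℝ :=
        real_inner_smul_right _ _ _
      have hnr : ‖β • g 0 ω‖ ^ 2 = β ^ 2 * ‖g 0 ω‖ ^ 2 := by
        rw [norm_smul, Real.norm_eq_abs, mul_pow, sq_abs]
      have hF0ω : Fp 0 ω = gradient J x₀ := congrFun hF0 ω
      rw [hF0ω]
      have h5 : ‖g 0 ω‖ ^ 2 ≤ ℓ ^ 2 := by nlinarith [norm_nonneg (g 0 ω)]
      have h6 : L / 2 * (β ^ 2 * ‖g 0 ω‖ ^ 2) ≤ L / 2 * (β ^ 2 * ℓ ^ 2) := by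
        have : (0:ℝ) ≤ L / 2 * β ^ 2 := by positivity
        nlinarith
      rw [hin, hnr] at hdesc
      linarith [hdesc, h6]
    have hB : Integrable (fun ω => β * ⟪Fp 0 ω, g 0 ω⟫_ℝ) μ :=
      (hinner_int 0 (Nat.zero_le _)).const_mul β
    have hA : Integrable (fun ω => J x₀ + β * ⟪Fp 0 ω, g 0 ω⟫_ℝ) μ :=
      (integrable_const _).add hB
    have hlhs_int : Integrable
        (fun ω => J x₀ + β * ⟪Fp 0 ω, g 0 ω⟫_ℝ - L / 2 * β ^ 2 * ℓ ^ 2) μ :=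
      hA.sub (integrable_const _)
    have hmono := integral_mono_ae hlhs_int (hJθ_int 1 hkthre) hptwise
    have hval : ∫ ω, (J x₀ + β * ⟪Fp 0 ω, g 0 ω⟫_ℝ - L / 2 * β ^ 2 * ℓ ^ 2) ∂μ
        = J x₀ + β * N ^ 2 - L / 2 * β ^ 2 * ℓ ^ 2 := by
      rw [integral_sub hA (integrable_const _),
        integral_add (integrable_const (J x₀)) hB,
        integral_const_mul, integral_const, hI0]
      simp [measure_univ]
    rw [hval] at hmono
    exact hmono
  -- step p ≥ 1 integral inequality
  have hstepp : ∀ p, 1 ≤ p → p < kthre →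
      (∫ ω, J (θ p ω) ∂μ) - L / 2 * α ^ 2 * ℓ ^ 2 ≤ ∫ ω, J (θ (p + 1) ω) ∂μ := by
    intro p hp1 hpk
    have hpk' : p ≤ kthre := le_of_lt hpk
    have hptwise : ∀ᵐ ω ∂μ,
        J (θ p ω) + α * ⟪Fp p ω, g p ω⟫_ℝ - L / 2 * α ^ 2 * ℓ ^ 2 ≤ J (θ (p + 1) ω) := by
      filter_upwards [hgbdd p] with ω hgp
      have hdesc := mrpg_descent hJdiff hJLip (θ p ω) (α • g p ω)
      rw [hstep p hp1 hpk ω]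
      have hin : ⟪gradient J (θ p ω), α • g p ω⟫_ℝ = α * ⟪Fp p ω, g p ω⟫_ℝ :=
        real_inner_smul_right _ _ _
      have hnr : ‖α • g p ω‖ ^ 2 = α ^ 2 * ‖g p ω‖ ^ 2 := by
        rw [norm_smul, Real.norm_eq_abs, mul_pow, sq_abs]
      have h5 : ‖g p ω‖ ^ 2 ≤ ℓ ^ 2 := by nlinarith [norm_nonneg (g p ω)]
      have h6 : L / 2 * (α ^ 2 * ‖g p ω‖ ^ 2) ≤ L / 2 * (α ^ 2 * ℓ ^ 2) := by
        have : (0:ℝ) ≤ L / 2 * α ^ 2 := by positivity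
        nlinarith
      rw [hin, hnr] at hdesc
      linarith [hdesc, h6]
    have hB : Integrable (fun ω => α * ⟪Fp p ω, g p ω⟫_ℝ) μ :=
      (hinner_int p hpk').const_mul α
    have hA : Integrable (fun ω => J (θ p ω) + α * ⟪Fp p ω, g p ω⟫_ℝ) μ :=
      (hJθ_int p hpk').add hB
    have hlhs_int : Integrable
        (fun ω => J (θ p ω) + α * ⟪Fp p ω, g p ω⟫_ℝ - L / 2 * α ^ 2 * ℓ ^ 2) μ :=
      hA.sub (integrable_const _)
    have hmono := integral_mono_ae hlhs_int (hJθ_int (p + 1) hpk) hptwise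
    have hval : ∫ ω, (J (θ p ω) + α * ⟪Fp p ω, g p ω⟫_ℝ - L / 2 * α ^ 2 * ℓ ^ 2) ∂μ
        = (∫ ω, J (θ p ω) ∂μ) + α * (∫ ω, ⟪Fp p ω, g p ω⟫_ℝ ∂μ) - L / 2 * α ^ 2 * ℓ ^ 2 := by
      rw [integral_sub hA (integrable_const _),
        integral_add (hJθ_int p hpk') hB,
        integral_const_mul, integral_const]
      simp [measure_univ]
    rw [hval] at hmono
    have hge : 0 ≤ α * ∫ ω, ⟪Fp p ω, g p ω⟫_ℝ ∂μ :=
      mul_nonneg (le_of_lt hα) (hIpos p hpk')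
    linarith
  -- induction over the steps
  have hmain : ∀ q, 1 ≤ q → q ≤ kthre →
      J x₀ + β * N ^ 2 - L / 2 * β ^ 2 * ℓ ^ 2 - ((q : ℝ) - 1) * (L / 2 * α ^ 2 * ℓ ^ 2)
        ≤ ∫ ω, J (θ q ω) ∂μ := by
    intro q
    induction q with
    | zero => intro h; exact absurd h (by norm_num)
    | succ r ih =>
      intro _ hq
      rcases Nat.eq_zero_or_pos r with h0 | hr
      · subst h0
        simpa using hstep1
      · have h1 : r < kthre := Nat.lt_of_succ_le hq
        have h2 := hstepp r hr h1
        have h3 := ih hr (le_of_lt h1)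
        have h4 : (((r : ℕ) + 1 : ℕ) : ℝ) - 1 = ((r : ℝ) - 1) + 1 := by push_cast; ring
        push_cast
        push_cast at h3
        linarith
  have hfinal := hmain kthre hkthre (le_refl _)
  -- arithmetic conclusion
  have hk1 : (1 : ℝ) ≤ (kthre : ℝ) := by exact_mod_cast hkthre
  have c1 : ((kthre : ℝ) - 1) * α ^ 2 ≤ β ^ 2 := by
    have := sq_nonneg α
    linarith [hαβk]
  have c2 : L / 2 * β ^ 2 * ℓ ^ 2 + ((kthre : ℝ) - 1) * (L / 2 * α ^ 2 * ℓ ^ 2)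
      ≤ L * ℓ ^ 2 * β ^ 2 := by
    have c2' := mul_le_mul_of_nonneg_left c1 (show (0:ℝ) ≤ L / 2 * ℓ ^ 2 by positivity)
    linarith [c2']
  have c3 : L * ℓ ^ 2 * β ^ 2 ≤ β * N ^ 2 / 2 := by
    have h1 : (2 * L * ℓ ^ 2 * β) * β ≤ ε ^ 2 * β :=
      mul_le_mul_of_nonneg_right hβε (le_of_lt hβ)
    have h2 : ε ^ 2 ≤ N ^ 2 := pow_le_pow_left₀ (le_of_lt hε) hgrad 2
    have h3 : ε ^ 2 * β ≤ N ^ 2 * β := mul_le_mul_of_nonneg_right h2 (le_of_lt hβ)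
    linarith
  linarith
end
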